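/- Simplicity of zeroes of the one-cell functions (Lemma 3.6, multiplicities): for every γ > 0, if k ∈ ℂ satisfies F₊(k,γ) = 0 and ∂F₊/∂k(k,γ) = 0, then k = 2i and moreover ∂²F₊/∂k²(2i,γ) ≠ 0; hence every zero of F₊(·,γ) other than a possible zero at k = 2i is simple, and if k = 2i is a zero it has order at most two. The same statements hold for F₋(·,γ). -/

import Mathlib

open Complex

/-- The entire function `c(z) = Σ (-1)^n z^n/(2n)!`, so that `c(w^2) = cos w`. -/
noncomputable def cEnt (z : ℂ) : ℂ := ∑' n : ℕ, (-1)^n * z^n / ((2*n).factorial : ℂ)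

/-- The entire function `s(z) = Σ (-1)^n z^n/(2n+1)!`, so that `w * s(w^2) = sin w`. -/
noncomputable def sEnt (z : ℂ) : ℂ := ∑' n : ℕ, (-1)^n * z^n / ((2*n+1).factorial : ℂ)

noncomputable def Fminus (k : ℂ) (γ : ℝ) : ℂ :=
  2*I*k * cEnt (k^2 - I*γ) - (2*k^2 - I*γ) * sEnt (k^2 - I*γ)

noncomputable def Fplus (k : ℂ) (γ : ℝ) : ℂ :=
  2*I*k * cEnt (k^2 + I*γ) - (2*k^2 + I*γ) * sEnt (k^2 + I*γ)

noncomputable def Fzero (k : ℂ) (γ : ℝ) : ℂ :=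
  (γ:ℂ)^2 * sEnt (k^2 - I*γ) * sEnt (k^2 + I*γ)

/-- The characteristic function `F(k,ℓ,γ)` of the PT-symmetric waveguide. -/
noncomputable def FF (k : ℂ) (ℓ γ : ℝ) : ℂ :=
  Fminus k γ * Fplus k γ - Complex.exp (-4*I*k*ℓ) * Fzero k γ

/-!
With `z = k² + a`, the function `F(k) = 2ik c(z) - (2k² + a) s(z)` has the form
`A(k) c(z) + B(k) s(z)` with polynomial coefficients, and since `c' = -s/2` and
`2 z s' = c - s`, so does `(k² + a) F'(k)`. At a double zero `k` this gives a linear system for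
`(c(z), s(z))` of determinant `-a² (k - 2i)`; for `k ≠ 2i` it forces `c(z) = s(z) = 0`, which
contradicts `c² + z s² = 1`. At `k = 2i`, where `z = a - 4 ≠ 0`, the same identity applied to
`(k² + a) F'` gives `(a - 4) F''(2i) = a² σ / 4` with `σ = s(a - 4)`, whereas `F(2i) = 0` and
`c² + z s² = 1` force `a² σ² = 16`.
-/

open scoped Nat

open Polynomial

open FormalMultilinearSeries in
theorem differentiable_tsum_mul_pow_of_norm_le_inv_factorial {c : ℕ → ℂ}
    (hc : ∀ n, ‖c n‖ ≤ (n ! : ℝ)⁻¹) :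
    Differentiable ℂ fun z => ∑' n, c n * z ^ n := by
  have hr : (ofScalars ℂ c).radius = ⊤ := by
    refine ENNReal.eq_top_of_forall_nnreal_le fun r => le_radius_of_summable _ ?_
    refine (Real.summable_pow_div_factorial r).of_nonneg_of_le (fun n => by positivity) fun n => ?_
    rw [ofScalars_norm, div_eq_inv_mul]
    gcongr
    exact hc n
  have h := (ofScalars ℂ c).hasFPowerSeriesOnBall (hr ▸ ENNReal.zero_lt_top)
  rw [hr] at h
  have hsum : (ofScalars ℂ c).sum = fun z => ∑' n, c n * z ^ n := by
    funext z
    simp only [FormalMultilinearSeries.sum, ofScalars_apply_eq, smul_eq_mul]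
  exact hsum ▸ fun z => (h.analyticAt_of_mem (by simp)).differentiableAt

theorem norm_neg_one_pow_div_factorial_le {m : ℕ → ℕ} (hm : ∀ n, n ≤ m n) (n : ℕ) :
    ‖(-1 : ℂ) ^ n / (m n)!‖ ≤ (n ! : ℝ)⁻¹ := by
  rw [norm_div, norm_pow, norm_neg, norm_one, one_pow, Complex.norm_natCast, one_div]
  gcongr
  exact hm n

theorem differentiable_cEnt : Differentiable ℂ cEnt := by
  have h : cEnt = fun z => ∑' n, (-1 : ℂ) ^ n / (2 * n)! * z ^ n :=
    funext fun z => tsum_congr fun n => by ring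
  exact h ▸ differentiable_tsum_mul_pow_of_norm_le_inv_factorial
    (norm_neg_one_pow_div_factorial_le (m := fun n => 2 * n) (by omega))

theorem differentiable_sEnt : Differentiable ℂ sEnt := by
  have h : sEnt = fun z => ∑' n, (-1 : ℂ) ^ n / (2 * n + 1)! * z ^ n :=
    funext fun z => tsum_congr fun n => by ring
  exact h ▸ differentiable_tsum_mul_pow_of_norm_le_inv_factorial
    (norm_neg_one_pow_div_factorial_le (m := fun n => 2 * n + 1) (by omega))

theorem cEnt_sq (w : ℂ) : cEnt (w ^ 2) = cos w := by
  rw [cEnt, ← (hasSum_cos w).tsum_eq]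
  simp only [pow_mul]

theorem mul_sEnt_sq (w : ℂ) : w * sEnt (w ^ 2) = sin w := by
  rw [sEnt, ← (hasSum_sin w).tsum_eq, ← tsum_mul_left]
  exact tsum_congr fun n => by ring

theorem cEnt_sq_add_mul_sEnt_sq (z : ℂ) : cEnt z ^ 2 + z * sEnt z ^ 2 = 1 := by
  obtain ⟨w, rfl⟩ := IsAlgClosed.exists_pow_nat_eq z two_pos
  linear_combination (cEnt (w ^ 2) + cos w) * cEnt_sq w
    + (w * sEnt (w ^ 2) + sin w) * mul_sEnt_sq w + sin_sq_add_cos_sq w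

/-- Differentiating `cEnt (w ^ 2) = cos w` only determines `deriv cEnt` off `0`; continuity of
both sides does the rest. -/
theorem deriv_cEnt : deriv cEnt = fun z => -sEnt z / 2 := by
  refine Continuous.ext_on (dense_compl_singleton 0)
    (differentiable_cEnt.contDiff.continuous_deriv le_rfl)
    (differentiable_sEnt.continuous.neg.div_const 2) fun z hz => ?_
  obtain ⟨w, rfl⟩ := IsAlgClosed.exists_pow_nat_eq z two_pos
  have hw : w ≠ 0 := by rintro rfl; simp at hz
  have h := (differentiable_cEnt _).hasDerivAt.comp w (hasDerivAt_pow 2 w)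
  rw [show cEnt ∘ (· ^ 2) = cos from funext cEnt_sq] at h
  have key := (h.unique (hasDerivAt_cos w)).trans (congrArg Neg.neg (mul_sEnt_sq w).symm)
  refine mul_left_cancel₀ hw ?_
  linear_combination key / 2

theorem hasDerivAt_cEnt (z : ℂ) : HasDerivAt cEnt (-sEnt z / 2) z := by
  simpa [deriv_cEnt] using (differentiable_cEnt z).hasDerivAt

theorem two_mul_mul_deriv_sEnt (z : ℂ) : 2 * z * deriv sEnt z = cEnt z - sEnt z := by
  obtain ⟨w, rfl⟩ := IsAlgClosed.exists_pow_nat_eq z two_pos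
  have h := (hasDerivAt_id w).mul ((differentiable_sEnt _).hasDerivAt.comp w (hasDerivAt_pow 2 w))
  rw [show id * sEnt ∘ (· ^ 2) = sin from funext mul_sEnt_sq] at h
  have key := (h.unique (hasDerivAt_sin w)).trans (cEnt_sq w).symm
  simp only [Function.comp_apply, id, Nat.cast_ofNat] at key
  linear_combination key

section TrigComb

variable (a : ℂ)

noncomputable def trigComb (p : ℂ[X] × ℂ[X]) (k : ℂ) : ℂ :=
  p.1.eval k * cEnt (k ^ 2 + a) + p.2.eval k * sEnt (k ^ 2 + a)

noncomputable def derivCoeffs (p : ℂ[X] × ℂ[X]) : ℂ[X] × ℂ[X] :=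
  ((X ^ 2 + C a) * derivative p.1 + X * p.2,
    (X ^ 2 + C a) * derivative p.2 - X * (X ^ 2 + C a) * p.1 - X * p.2)

theorem hasDerivAt_trigComb (p : ℂ[X] × ℂ[X]) (k : ℂ) :
    HasDerivAt (trigComb a p)
      ((derivative p.1).eval k * cEnt (k ^ 2 + a) - k * p.1.eval k * sEnt (k ^ 2 + a)
        + (derivative p.2).eval k * sEnt (k ^ 2 + a)
        + 2 * k * p.2.eval k * deriv sEnt (k ^ 2 + a)) k := by
  have hz : HasDerivAt (fun k : ℂ => k ^ 2 + a) (2 * k) k := by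
    simpa using (hasDerivAt_pow 2 k).add_const a
  have h := ((p.1.hasDerivAt k).mul ((hasDerivAt_cEnt _).comp k hz)).add
    ((p.2.hasDerivAt k).mul ((differentiable_sEnt _).hasDerivAt.comp k hz))
  exact h.congr_deriv (by simp only [Function.comp_apply]; ring)

theorem differentiable_trigComb (p : ℂ[X] × ℂ[X]) : Differentiable ℂ (trigComb a p) :=
  fun k => (hasDerivAt_trigComb a p k).differentiableAt

/-- The factor `k ^ 2 + a` is what lets `two_mul_mul_deriv_sEnt` eliminate `deriv sEnt`. -/
theorem sq_add_mul_deriv_trigComb (p : ℂ[X] × ℂ[X]) (k : ℂ) :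
    (k ^ 2 + a) * deriv (trigComb a p) k = trigComb a (derivCoeffs a p) k := by
  rw [(hasDerivAt_trigComb a p k).deriv]
  simp only [trigComb, derivCoeffs, eval_add, eval_sub, eval_mul, eval_pow, eval_X, eval_C]
  linear_combination p.2.eval k * k * two_mul_mul_deriv_sEnt (k ^ 2 + a)

end TrigComb

noncomputable def oneCellCoeffs (a : ℂ) : ℂ[X] × ℂ[X] := (C (2 * I) * X, -(2 * X ^ 2 + C a))

theorem trigComb_oneCellCoeffs (a k : ℂ) :
    trigComb a (oneCellCoeffs a) k = 2*I*k * cEnt (k^2 + a) - (2*k^2 + a) * sEnt (k^2 + a) := by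
  simp only [trigComb, oneCellCoeffs, eval_mul, eval_C, eval_X, eval_neg, eval_add, eval_pow,
    eval_ofNat]
  ring

theorem trigComb_derivCoeffs_oneCellCoeffs (a k : ℂ) :
    trigComb a (derivCoeffs a (oneCellCoeffs a)) k =
      (2 * I * (k ^ 2 + a) - k * (2 * k ^ 2 + a)) * cEnt (k ^ 2 + a)
        + (k * (2 * k ^ 2 + a) - 2 * I * k ^ 2 * (k ^ 2 + a) - 4 * k * (k ^ 2 + a))
          * sEnt (k ^ 2 + a) := by
  simp only [trigComb, derivCoeffs, oneCellCoeffs, derivative_mul, derivative_add, derivative_neg,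
    derivative_C, derivative_X, derivative_X_pow, derivative_ofNat, eval_add, eval_sub, eval_mul,
    eval_neg, eval_pow, eval_X, eval_C, eval_ofNat, eval_one, eval_zero]
  ring

theorem trigComb_derivCoeffs_derivCoeffs_oneCellCoeffs_two_mul_I (a : ℂ) :
    trigComb a (derivCoeffs a (derivCoeffs a (oneCellCoeffs a))) (2 * I) =
      (16 * a - a ^ 2 - 32) * cEnt (a - 4) + (5 * a ^ 2 - 40 * a + 64) * sEnt (a - 4) := by
  have hz : (2 * I) ^ 2 + a = a - 4 := by linear_combination 4 * I_sq
  simp only [trigComb, derivCoeffs, oneCellCoeffs, derivative_mul, derivative_add, derivative_sub,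
    derivative_neg, derivative_C, derivative_X, derivative_X_pow, derivative_ofNat, derivative_zero,
    derivative_one, eval_add, eval_sub, eval_mul, eval_neg, eval_pow, eval_X, eval_C, eval_ofNat,
    eval_one, eval_zero, hz]
  ring_nf
  simp only [I_sq, I_pow_four]
  ring

theorem eq_two_mul_I_of_trigComb_oneCellCoeffs {a k : ℂ} (ha : a ≠ 0)
    (h0 : trigComb a (oneCellCoeffs a) k = 0)
    (h1 : deriv (trigComb a (oneCellCoeffs a)) k = 0) : k = 2 * I := by
  have e1 := sq_add_mul_deriv_trigComb a (oneCellCoeffs a) k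
  rw [h1, mul_zero, eq_comm, trigComb_derivCoeffs_oneCellCoeffs] at e1
  rw [trigComb_oneCellCoeffs] at h0
  by_contra hk
  set z := k ^ 2 + a
  have hdet : a ^ 2 * (k - 2 * I) ≠ 0 := mul_ne_zero (pow_ne_zero 2 ha) (sub_ne_zero.2 hk)
  have hc : cEnt z = 0 := by
    refine (mul_eq_zero.1 ?_).resolve_left hdet
    linear_combination (4 * k * z + 2 * I * k ^ 2 * z - k * (2 * k ^ 2 + a)) * h0
      - (2 * k ^ 2 + a) * e1 - 4 * k ^ 3 * z * cEnt z * I_sq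
  have hs : sEnt z = 0 := by
    refine (mul_eq_zero.1 ?_).resolve_left hdet
    linear_combination (2 * I * z - k * (2 * k ^ 2 + a)) * h0 - 2 * I * k * e1
      - 4 * k ^ 3 * z * sEnt z * I_sq
  simpa [hc, hs] using cEnt_sq_add_mul_sEnt_sq z

theorem iteratedDeriv_two_trigComb_oneCellCoeffs_ne_zero {a : ℂ} (ha4 : a ≠ 4)
    (h0 : trigComb a (oneCellCoeffs a) (2 * I) = 0)
    (h1 : deriv (trigComb a (oneCellCoeffs a)) (2 * I) = 0) :
    iteratedDeriv 2 (trigComb a (oneCellCoeffs a)) (2 * I) ≠ 0 := by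
  have hz : HasDerivAt (fun k : ℂ => k ^ 2 + a) (2 * (2 * I)) (2 * I) := by
    simpa using (hasDerivAt_pow 2 (2 * I)).add_const a
  have hG' := ((differentiable_trigComb a (oneCellCoeffs a)).analyticAt (2 * I)).deriv
  have hprod : HasDerivAt (fun k => (k ^ 2 + a) * deriv (trigComb a (oneCellCoeffs a)) k) _ _ :=
    hz.mul hG'.differentiableAt.hasDerivAt
  have e2 := sq_add_mul_deriv_trigComb a (derivCoeffs a (oneCellCoeffs a)) (2 * I)
  rw [← funext (sq_add_mul_deriv_trigComb a _), hprod.deriv,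
    trigComb_derivCoeffs_derivCoeffs_oneCellCoeffs_two_mul_I] at e2
  rw [iteratedDeriv_succ, iteratedDeriv_one]
  intro h2
  simp only [h1, h2, mul_zero, add_zero] at e2
  rw [trigComb_oneCellCoeffs, show (2 * I) ^ 2 + a = a - 4 by linear_combination 4 * I_sq] at h0
  have P := cEnt_sq_add_mul_sEnt_sq (a - 4)
  generalize cEnt (a - 4) = c at h0 e2 P
  generalize sEnt (a - 4) = s at h0 e2 P
  have h0' : 4 * c + (a - 8) * s = 0 := by linear_combination -h0 + (4 * c - 8 * s) * I_sq
  have h16 : a ^ 2 * s ^ 2 = 16 := by linear_combination ((a - 8) * s - 4 * c) * h0' + 16 * P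
  have hs : (a - 4) * a ^ 2 * s = 0 := by
    linear_combination -4 * e2 - (16 * a - a ^ 2 - 32) * h0'
  exact sub_ne_zero.2 ha4 (by linear_combination (s * hs - (a - 4) * h16) / 16)

theorem trigComb_oneCellCoeffs_double_zero {a k : ℂ} (ha : a ≠ 0) (ha4 : a ≠ 4)
    (h0 : trigComb a (oneCellCoeffs a) k = 0)
    (h1 : deriv (trigComb a (oneCellCoeffs a)) k = 0) :
    k = 2 * I ∧ iteratedDeriv 2 (trigComb a (oneCellCoeffs a)) (2 * I) ≠ 0 := by
  obtain rfl := eq_two_mul_I_of_trigComb_oneCellCoeffs ha h0 h1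
  exact ⟨rfl, iteratedDeriv_two_trigComb_oneCellCoeffs_ne_zero ha4 h0 h1⟩

theorem stmt_12 (γ : ℝ) (hγ : 0 < γ) :
    (∀ k : ℂ, Fplus k γ = 0 → deriv (fun k : ℂ => Fplus k γ) k = 0 →
        k = 2*I ∧ iteratedDeriv 2 (fun k : ℂ => Fplus k γ) (2*I) ≠ 0) ∧
    (∀ k : ℂ, Fminus k γ = 0 → deriv (fun k : ℂ => Fminus k γ) k = 0 →
        k = 2*I ∧ iteratedDeriv 2 (fun k : ℂ => Fminus k γ) (2*I) ≠ 0) := by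
  have hplus : (fun k => Fplus k γ) = trigComb (I * γ) (oneCellCoeffs (I * γ)) :=
    funext fun k => (trigComb_oneCellCoeffs _ k).symm
  have hminus : (fun k => Fminus k γ) = trigComb (-(I * γ)) (oneCellCoeffs (-(I * γ))) :=
    funext fun k => by simp only [Fminus, trigComb_oneCellCoeffs, sub_eq_add_neg]
  have hne : I * γ ≠ 0 := mul_ne_zero I_ne_zero (by exact_mod_cast hγ.ne')
  have hne4 (a : ℂ) (hre : a.re = 0) : a ≠ 4 := by rintro rfl; simp at hre
  refine ⟨fun k h0 h1 => ?_, fun k h0 h1 => ?_⟩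
  · rw [hplus] at h1 ⊢
    exact trigComb_oneCellCoeffs_double_zero hne (hne4 _ (by simp)) (congrFun hplus k ▸ h0) h1
  · rw [hminus] at h1 ⊢
    exact trigComb_oneCellCoeffs_double_zero (neg_ne_zero.2 hne) (hne4 _ (by simp))
      (congrFun hminus k ▸ h0) h1
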